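/- Let L_2 : ℤ[x^{±1}, v^{±2}] → ℤ[v^{±1}] be the ℤ[v^{±2}]-linear map sending x^a to v^{-a²}, with q = v². Then for every nonnegative integer k, L_2((x;q)_{k+1}(x^{-1};q)_{k+1}) = 2·(-1)^{k+1}·v^{-k-1}·(1-v)·(-v²;-v)_{2k}. -/

import Mathlib

open LaurentPolynomial Finset

/-- The ring `ℤ[v^{±1}]` of Laurent polynomials in `v`. -/
noncomputable abbrev Rv := LaurentPolynomial ℤ

/-- The `ℤ[v^{±2}]`-linear "Laplace transform" on `ℤ[x^{±1}, v^{±2}]`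
(modeled as Laurent polynomials in `x` over `ℤ[v^{±1}]`), sending `x^a ↦ g a`. -/
noncomputable def Lap (g : ℤ → Rv) (f : LaurentPolynomial Rv) : Rv :=
  Finsupp.sum f.coeff fun a c => c * g a

/-!
Let `σ` be the substitution `x ↦ qx`. Completing the square gives
`L₂(x^a σ f) = v^{1-2a} L₂(x^{a-1} f)` for every `a`, and `σ` shifts q-Pochhammer symbols:
`(1 - x) σ (x;q)_n = (x;q)_{n+1}` and `σ (q/x;q)_{m+1} = (1 - 1/x) (q/x;q)_m`. Since
`x (1 - 1/x) = -(1 - x)`, this moves the factors of `(q/x;q)_m` one by one onto `(x;q)_n`: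
`L₂(x^s (x;q)_n (q/x;q)_m) = (-v^{2s+1})^m L₂(x^s (x;q)_{n+m})`. Writing
`(1/x;q)_{k+1} = (1 - 1/x) (q/x;q)_k` reduces the theorem to `a_n = L₂((x;q)_n)` and
`b_n = L₂(x⁻¹ (x;q)_n)` for `n = 2k+1`; these satisfy a coupled first-order recursion whose
solution is `b_n = (-v)^n v⁻¹ a_n` and `a_n = (-v⁻¹)^n ∏_{i=1}^n (1 + (-v)^i)`.
-/

def qPochhammer {R : Type*} [CommRing R] (q y : R) (n : ℕ) : R :=
  ∏ i ∈ range n, (1 - y * q ^ i)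

section qPochhammer

variable {R : Type*} [CommRing R] (q y : R) (n : ℕ)

@[simp]
theorem qPochhammer_zero : qPochhammer q y 0 = 1 :=
  prod_range_zero _

theorem qPochhammer_succ : qPochhammer q y (n + 1) = qPochhammer q y n * (1 - y * q ^ n) :=
  prod_range_succ _ n

theorem qPochhammer_succ' : qPochhammer q y (n + 1) = (1 - y) * qPochhammer q (y * q) n := by
  rw [qPochhammer, qPochhammer, prod_range_succ', pow_zero, mul_one, mul_comm]
  congr 1
  exact prod_congr rfl fun i _ => by ring

theorem map_qPochhammer {S F : Type*} [CommRing S] [FunLike F R S] [RingHomClass F R S] (φ : F) :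
    φ (qPochhammer q y n) = qPochhammer (φ q) (φ y) n := by
  simp [qPochhammer, map_prod]

end qPochhammer

namespace LaurentPolynomial

variable {R : Type*} [CommSemiring R]

theorem T_one_mul_T_neg_one : (T 1 : R[T;T⁻¹]) * T (-1) = 1 :=
  mul_invOf_self _

/-- The substitution `x ↦ v^m x` on Laurent polynomials in `x` over `R[v^{±1}]`. -/
noncomputable def scaleT (m : ℤ) : R[T;T⁻¹][T;T⁻¹] →ₐ[R[T;T⁻¹]] R[T;T⁻¹][T;T⁻¹] :=
  AddMonoidAlgebra.lift _ _ ℤ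
    { toFun := fun n => C (T (m * n.toAdd)) * T n.toAdd
      map_one' := by simp
      map_mul' := fun a b => by simp only [toAdd_mul, mul_add, T_add, map_mul]; ring }

theorem scaleT_C_mul_T (m n : ℤ) (c : R[T;T⁻¹]) :
    scaleT m (C c * T n) = C (c * T (m * n)) * T n := by
  rw [← single_eq_C_mul_T, scaleT, AddMonoidAlgebra.lift_single, smul_eq_C_mul, map_mul,
    mul_assoc]
  rfl

theorem scaleT_T (m n : ℤ) : scaleT m (T n : R[T;T⁻¹][T;T⁻¹]) = T n * C (T (m * n)) := by
  rw [← one_mul (T n), ← map_one C, scaleT_C_mul_T, one_mul, map_one, one_mul, mul_comm]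

theorem scaleT_C (m : ℤ) (c : R[T;T⁻¹]) : scaleT m (C c) = C c := by
  rw [← mul_one (C c), ← T_zero, scaleT_C_mul_T, mul_zero, T_zero, mul_one]

end LaurentPolynomial

noncomputable def lapLinearMap (g : ℤ → Rv) : LaurentPolynomial Rv →ₗ[Rv] Rv :=
  Finsupp.linearCombination Rv g ∘ₗ (AddMonoidAlgebra.coeffLinearEquiv Rv).toLinearMap

section Lap

variable (g : ℤ → Rv)

theorem Lap_add (f h : LaurentPolynomial Rv) : Lap g (f + h) = Lap g f + Lap g h :=
  map_add (lapLinearMap g) f h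

theorem Lap_sub (f h : LaurentPolynomial Rv) : Lap g (f - h) = Lap g f - Lap g h :=
  map_sub (lapLinearMap g) f h

theorem Lap_neg (f : LaurentPolynomial Rv) : Lap g (-f) = -Lap g f :=
  map_neg (lapLinearMap g) f

theorem Lap_C_mul (c : Rv) (f : LaurentPolynomial Rv) : Lap g (C c * f) = c * Lap g f := by
  rw [← smul_eq_C_mul]
  exact map_smul (lapLinearMap g) c f

theorem Lap_C_mul_T (c : Rv) (n : ℤ) : Lap g (C c * T n) = c * g n := by
  rw [← single_eq_C_mul_T]
  exact Finsupp.sum_single_index (zero_mul _)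

theorem Lap_T (n : ℤ) : Lap g (T n) = g n := by
  simpa using Lap_C_mul_T g 1 n

end Lap

local notation "L₂" => Lap fun a => T (-a ^ 2)

theorem L₂_one : L₂ 1 = 1 := by
  rw [← T_zero, Lap_T]
  simp

theorem L₂_T_mul_scaleT (a : ℤ) (f : LaurentPolynomial Rv) :
    L₂ (T a * scaleT 2 f) = T (1 - 2 * a) * L₂ (T (a - 1) * f) := by
  induction f using LaurentPolynomial.induction_on' with
  | add f h hf hh => rw [map_add, mul_add, mul_add, Lap_add, Lap_add, hf, hh, mul_add]
  | C_mul_T n c =>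
    rw [scaleT_C_mul_T, mul_left_comm, ← T_add, mul_left_comm, ← T_add, Lap_C_mul_T,
      Lap_C_mul_T, mul_assoc, ← T_add, mul_left_comm, ← T_add]
    congr 2
    ring

-- With `x = T 1` and `q = v² = C (T 2)`: `xPoch n = (x;q)_n` and `qxInvPoch n = (q/x;q)_n`.
noncomputable def xPoch (n : ℕ) : LaurentPolynomial Rv :=
  qPochhammer (C (T 2)) (T 1) n

noncomputable def qxInvPoch (n : ℕ) : LaurentPolynomial Rv :=
  qPochhammer (C (T 2)) (T (-1) * C (T 2)) n

theorem scaleT_xPoch (n : ℕ) : (1 - T 1) * scaleT 2 (xPoch n) = xPoch (n + 1) := by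
  rw [xPoch, xPoch, map_qPochhammer, scaleT_C, scaleT_T, mul_one, qPochhammer_succ']

theorem scaleT_qxInvPoch (n : ℕ) :
    scaleT 2 (qxInvPoch (n + 1)) = (1 - T (-1)) * qxInvPoch n := by
  rw [qxInvPoch, qxInvPoch, map_qPochhammer, scaleT_C, map_mul, scaleT_C, scaleT_T, mul_assoc,
    ← map_mul, ← T_add, mul_neg, mul_one, neg_add_cancel, T_zero, map_one, mul_one,
    qPochhammer_succ']

theorem L₂_T_mul_xPoch_mul_qxInvPoch (s : ℤ) (n m : ℕ) :
    L₂ (T s * (xPoch n * qxInvPoch m)) = (-T (2 * s + 1)) ^ m * L₂ (T s * xPoch (n + m)) := by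
  induction m generalizing n with
  | zero => simp [qxInvPoch]
  | succ m ih =>
    have hshift : T (s + 1) * scaleT 2 (xPoch n * qxInvPoch (m + 1))
        = -(T s * (xPoch (n + 1) * qxInvPoch m)) := by
      rw [map_mul, scaleT_qxInvPoch, ← scaleT_xPoch, T_add]
      linear_combination (-(T s * scaleT 2 (xPoch n) * qxInvPoch m)) * T_one_mul_T_neg_one (R := Rv)
    have h := L₂_T_mul_scaleT (s + 1) (xPoch n * qxInvPoch (m + 1))
    rw [hshift, Lap_neg, ih, add_sub_cancel_right] at h
    have hT : (T (2 * s + 1) : Rv) * T (1 - 2 * (s + 1)) = 1 := by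
      rw [← T_add, ← T_zero]
      congr 1
      ring
    rw [pow_succ', mul_assoc, show n + (m + 1) = n + 1 + m by omega]
    linear_combination (-T (2 * s + 1)) * h - L₂ (T s * (xPoch n * qxInvPoch (m + 1))) * hT

theorem L₂_xPoch_succ (n : ℕ) :
    L₂ (xPoch (n + 1)) = T 1 * L₂ (T (-1) * xPoch n) - T (-1) * L₂ (xPoch n) := by
  have h0 := L₂_T_mul_scaleT 0 (xPoch n)
  have h1 := L₂_T_mul_scaleT 1 (xPoch n)
  norm_num only [T_zero, one_mul] at h0 h1
  rw [← scaleT_xPoch, sub_mul, one_mul, Lap_sub, h0, h1]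

theorem L₂_T_neg_one_mul_xPoch_succ (n : ℕ) :
    L₂ (T (-1) * xPoch (n + 1)) = L₂ (T (-1) * xPoch n) - T 1 ^ (2 * n) * L₂ (xPoch n) := by
  have hq : (C (T 2) : LaurentPolynomial Rv) ^ n = C (T 1 ^ (2 * n)) := by
    rw [← map_pow, T_pow, T_pow]
    push_cast
    ring_nf
  have h : T (-1) * xPoch (n + 1) = T (-1) * xPoch n - C (T 1 ^ (2 * n)) * xPoch n := by
    rw [xPoch, qPochhammer_succ, ← xPoch, hq]
    linear_combination (-(C (T 1 ^ (2 * n)) * xPoch n)) * T_one_mul_T_neg_one (R := Rv)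
  rw [h, Lap_sub, Lap_C_mul]

theorem L₂_T_neg_one_mul_xPoch (n : ℕ) :
    L₂ (T (-1) * xPoch n) = (-T 1) ^ n * T (-1) * L₂ (xPoch n) := by
  induction n with
  | zero => simp [xPoch, Lap_T, L₂_one]
  | succ n ih =>
    rw [L₂_T_neg_one_mul_xPoch_succ, L₂_xPoch_succ, ih]
    have hsign : (-1 : Rv) ^ (2 * n) = 1 := by rw [pow_mul]; norm_num
    linear_combination
      (T 1 ^ (2 * n) * (T 1 * T (-1) + 1) - (-T 1) ^ n * T (-1)) * L₂ (xPoch n) *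
          T_one_mul_T_neg_one (R := ℤ) +
        T 1 ^ 2 * T 1 ^ (2 * n) * T (-1) ^ 2 * L₂ (xPoch n) * hsign

theorem L₂_xPoch (n : ℕ) :
    L₂ (xPoch n) = (-T (-1)) ^ n * ∏ i ∈ range n, (1 + (-T 1) ^ (i + 1)) := by
  induction n with
  | zero => simp [xPoch, L₂_one]
  | succ n ih =>
    rw [L₂_xPoch_succ, L₂_T_neg_one_mul_xPoch, ih, prod_range_succ]
    ring

theorem L₂_xPoch_mul_one_sub_T_neg_one_mul_qxInvPoch (k : ℕ) :
    L₂ (xPoch (k + 1) * ((1 - T (-1)) * qxInvPoch k)) =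
      2 * (-T 1) ^ k * L₂ (xPoch (2 * k + 1)) := by
  have hsplit : xPoch (k + 1) * ((1 - T (-1)) * qxInvPoch k)
      = T 0 * (xPoch (k + 1) * qxInvPoch k) - T (-1) * (xPoch (k + 1) * qxInvPoch k) := by
    rw [T_zero]
    ring
  rw [hsplit, Lap_sub, L₂_T_mul_xPoch_mul_qxInvPoch, L₂_T_mul_xPoch_mul_qxInvPoch, T_zero,
    one_mul, L₂_T_neg_one_mul_xPoch, show k + 1 + k = 2 * k + 1 by ring,
    show 2 * (0 : ℤ) + 1 = 1 by norm_num, show 2 * (-1 : ℤ) + 1 = -1 by norm_num]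
  have hvk : (T 1 * T (-1) : Rv) ^ (k + 1) = 1 := by rw [T_one_mul_T_neg_one, one_pow]
  have hsign : (-1 : Rv) ^ (2 * k) = 1 := by rw [pow_mul]; norm_num
  linear_combination (-1) ^ k * T 1 ^ k * L₂ (xPoch (2 * k + 1)) *
    ((-1) ^ (2 * k) * hvk + hsign)

/-- Lemma 5.2 (second formula): with `q = v²` and `L_2 : x^a ↦ v^{-a²}`,
`L_2((x;q)_{k+1}(x^{-1};q)_{k+1}) = 2 (-1)^{k+1} v^{-k-1} (1-v) (-v²;-v)_{2k}`. -/
theorem laplace_two (k : ℕ) :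
    Lap (fun a => T (-a ^ 2))
        ((∏ i ∈ Finset.range (k + 1), (1 - T 1 * C (T 2 ^ i))) *
          ∏ i ∈ Finset.range (k + 1), (1 - T (-1) * C (T 2 ^ i))) =
      2 * (-1) ^ (k + 1) * T (-(k : ℤ) - 1) * (1 - T 1) *
        ∏ i ∈ Finset.range (2 * k), (1 + (-T 1) ^ (i + 2)) := by
  have hx : ∏ i ∈ range (k + 1), (1 - T 1 * C (T 2 ^ i)) = xPoch (k + 1) := by
    simp only [xPoch, qPochhammer, map_pow]
  have hxinv : ∏ i ∈ range (k + 1), (1 - T (-1) * C (T 2 ^ i)) = (1 - T (-1)) * qxInvPoch k := by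
    rw [qxInvPoch, ← qPochhammer_succ']
    simp only [qPochhammer, map_pow]
  have hprod : ∏ i ∈ range (2 * k + 1), (1 + (-T 1 : Rv) ^ (i + 1))
      = (∏ i ∈ range (2 * k), (1 + (-T 1) ^ (i + 2))) * (1 - T 1) := by
    rw [prod_range_succ', zero_add, pow_one, ← sub_eq_add_neg]
  have hTk : (T (-(k : ℤ) - 1) : Rv) = T (-1) ^ (k + 1) := by
    rw [T_pow]
    push_cast
    ring_nf
  rw [hx, hxinv, L₂_xPoch_mul_one_sub_T_neg_one_mul_qxInvPoch, L₂_xPoch, hprod, hTk]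
  have hvk : (T 1 * T (-1) : Rv) ^ k = 1 := by rw [T_one_mul_T_neg_one, one_pow]
  have hsign : (-1 : Rv) ^ (2 * k) = 1 := by rw [pow_mul]; norm_num
  set P := ∏ i ∈ range (2 * k), (1 + (-T 1 : Rv) ^ (i + 2))
  linear_combination -2 * (-1) ^ k * (1 - T 1) * P * T (-1) ^ (k + 1) *
    ((T 1 * T (-1)) ^ k * hsign + hvk)
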